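/- For the cobweb poset Π designated by F with F₀ = 1, the k-th Whitney number of the first kind satisfies w_k(Π) = Σ_{x : r(x)=k} μ(0̂,x) = F_k · (-1)^k · ∏_{i=1}^{k-1} (F_i - 1) for k ≥ 1, and w_0(Π) = 1. -/

import Mathlib

/-- The cobweb order relation on pairs `(j, s)` where `s` is the level:
`⟨j,s⟩ ≤ ⟨q,u⟩` iff `s < u` or (`s = u` and `j = q`). -/
def cobwebLE (p q : ℕ × ℕ) : Prop :=
  p.2 < q.2 ∨ (p.2 = q.2 ∧ p.1 = q.1)

/-- Vertices of the cobweb poset designated by `F`: pairs `(j, s)` with `1 ≤ j ≤ F s`. -/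
def CobwebVertex (F : ℕ → ℕ) : Type :=
  {p : ℕ × ℕ // 1 ≤ p.1 ∧ p.1 ≤ F p.2}

instance (F : ℕ → ℕ) : PartialOrder (CobwebVertex F) where
  le x y := cobwebLE x.val y.val
  le_refl x := Or.inr ⟨rfl, rfl⟩
  le_trans x y z hxy hyz := by
    rcases hxy with h | ⟨h1, h2⟩
    · rcases hyz with h' | ⟨h1', h2'⟩
      · exact Or.inl (h.trans h')
      · exact Or.inl (h1' ▸ h)
    · rcases hyz with h' | ⟨h1', h2'⟩
      · exact Or.inl (h1 ▸ h')
      · exact Or.inr ⟨h1.trans h1', h2.trans h2'⟩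
  le_antisymm x y hxy hyx := by
    rcases hxy with h | ⟨h1, h2⟩
    · rcases hyx with h' | ⟨h1', h2'⟩
      · exact absurd (h.trans h') (lt_irrefl _)
      · exact absurd (h1' ▸ h) (lt_irrefl _)
    · rcases hyx with h' | ⟨h1', h2'⟩
      · exact absurd (h1 ▸ h') (lt_irrefl _)
      · exact Subtype.ext (Prod.ext h2 h1)

/-- The rank of a vertex is its level. -/
def rank {F : ℕ → ℕ} (x : CobwebVertex F) : ℕ := x.val.2

/-!
Since `F 0 = 1`, the vertex `0̂` is the bottom of `Π`, so for `x` of rank `k ≥ 1` the interval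
`[0̂, x]` consists of `x` and all vertices of rank `< k`. The defining recurrence of `μ` then gives
`μ(0̂, x) = -(w₀ + ⋯ + w_{k-1})` for every such `x`, whence `w_k = -F_k (w₀ + ⋯ + w_{k-1})`.
Thus the partial sums satisfy `w₀ + ⋯ + w_k = (1 - F_k)(w₀ + ⋯ + w_{k-1})` and equal
`∏_{i=1}^k (1 - F_i)`.
-/

open Finset

section Recurrence

variable {R : Type*} [CommRing R] {a w : ℕ → R}

theorem sum_range_succ_eq_prod_one_sub (h0 : w 0 = 1)
    (hrec : ∀ k, 0 < k → w k = -a k * ∑ s ∈ range k, w s) (n : ℕ) :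
    ∑ s ∈ range (n + 1), w s = ∏ i ∈ Icc 1 n, (1 - a i) := by
  induction n with
  | zero => simp [h0]
  | succ n ih =>
    rw [sum_range_succ, hrec (n + 1) n.succ_pos, ih, prod_Icc_succ_top (by omega)]
    ring

theorem eq_prod_sub_one_of_recurrence (h0 : w 0 = 1)
    (hrec : ∀ k, 0 < k → w k = -a k * ∑ s ∈ range k, w s) {k : ℕ} (hk : 0 < k) :
    w k = a k * (-1) ^ k * ∏ i ∈ Icc 1 (k - 1), (a i - 1) := by
  obtain ⟨n, rfl⟩ : ∃ n, k = n + 1 := ⟨k - 1, by omega⟩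
  have hprod : ∏ i ∈ Icc 1 n, (1 - a i) = (-1) ^ n * ∏ i ∈ Icc 1 n, (a i - 1) := by
    simpa only [neg_sub, Nat.card_Icc, Nat.add_sub_cancel] using prod_neg (s := Icc 1 n) (a · - 1)
  rw [hrec _ hk, sum_range_succ_eq_prod_one_sub h0 hrec, hprod, Nat.add_sub_cancel]
  ring

end Recurrence

namespace CobwebVertex

variable {F : ℕ → ℕ}

theorem le_iff_rank_lt_or_eq {x y : CobwebVertex F} : x ≤ y ↔ rank x < rank y ∨ x = y :=
  or_congr_right (and_comm.trans (Prod.ext_iff.symm.trans Subtype.ext_iff.symm))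

theorem lt_of_rank_lt {x y : CobwebVertex F} (h : rank x < rank y) : x < y :=
  lt_of_le_of_ne (le_iff_rank_lt_or_eq.2 (Or.inl h)) fun hxy => h.ne (congrArg rank hxy)

def level (F : ℕ → ℕ) (s : ℕ) : Finset (CobwebVertex F) :=
  (Icc 1 (F s)).attach.map
    ⟨fun j => (⟨(j.1, s), mem_Icc.1 j.2⟩ : CobwebVertex F),
     fun _ _ h => Subtype.ext (congrArg (fun x : CobwebVertex F => x.val.1) h)⟩

theorem mem_level {s : ℕ} {x : CobwebVertex F} : x ∈ level F s ↔ rank x = s := by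
  simp only [level, mem_map, mem_attach, true_and]
  constructor
  · rintro ⟨j, rfl⟩
    rfl
  · intro hx
    exact ⟨⟨x.val.1, mem_Icc.2 ⟨x.2.1, hx ▸ x.2.2⟩⟩, Subtype.ext (Prod.ext rfl hx.symm)⟩

theorem coe_level (s : ℕ) : (level F s : Set (CobwebVertex F)) = {x | rank x = s} :=
  Set.ext fun _ => mem_level

theorem card_level (F : ℕ → ℕ) (s : ℕ) : #(level F s) = F s := by
  simp [level]

theorem pairwiseDisjoint_level : (Set.univ : Set ℕ).PairwiseDisjoint (level F) :=
  fun _ _ _ _ hst =>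
    disjoint_left.2 fun _ hs ht => hst ((mem_level.1 hs).symm.trans (mem_level.1 ht))

def belowRank (F : ℕ → ℕ) (k : ℕ) : Finset (CobwebVertex F) :=
  (range k).disjiUnion (level F) (pairwiseDisjoint_level.subset (Set.subset_univ _))

theorem mem_belowRank {k : ℕ} {x : CobwebVertex F} : x ∈ belowRank F k ↔ rank x < k := by
  simp only [belowRank, mem_disjiUnion, mem_range, mem_level]
  exact ⟨fun ⟨_, hs, hx⟩ => hx ▸ hs, fun hx => ⟨_, hx, rfl⟩⟩

theorem sum_belowRank {M : Type*} [AddCommMonoid M] (f : CobwebVertex F → M) (k : ℕ) :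
    ∑ x ∈ belowRank F k, f x = ∑ s ∈ range k, ∑ x ∈ level F s, f x :=
  sum_disjiUnion _ _ _

theorem eq_of_rank_eq_zero (hF0 : F 0 = 1) {zero x : CobwebVertex F}
    (hzero : zero.val = (1, 0)) (hx : rank x = 0) : x = zero := by
  have hx1 : x.val.1 = 1 := by
    have := x.2
    rw [show x.val.2 = 0 from hx, hF0] at this
    omega
  exact Subtype.ext (hzero ▸ Prod.ext hx1 hx)

theorem level_zero (hF0 : F 0 = 1) {zero : CobwebVertex F} (hzero : zero.val = (1, 0)) :
    level F 0 = {zero} :=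
  eq_singleton_iff_unique_mem.2
    ⟨mem_level.2 (congrArg Prod.snd hzero), fun _ hx => eq_of_rank_eq_zero hF0 hzero (mem_level.1 hx)⟩

theorem isBot_of_val_eq (hF0 : F 0 = 1) {zero : CobwebVertex F} (hzero : zero.val = (1, 0)) :
    IsBot zero := fun x => by
  rcases Nat.eq_zero_or_pos (rank x) with hx | hx
  · exact (eq_of_rank_eq_zero hF0 hzero hx).ge
  · exact (lt_of_rank_lt (show rank zero < rank x from (congrArg Prod.snd hzero).trans_lt hx)).le

theorem Icc_eq_insert_belowRank {zero : CobwebVertex F} (hbot : IsBot zero) (x : CobwebVertex F) :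
    Set.Icc zero x = insert x ↑(belowRank F (rank x)) := by
  ext z
  simp only [Set.mem_Icc, hbot z, true_and, Set.mem_insert_iff, mem_coe, mem_belowRank,
    le_iff_rank_lt_or_eq, or_comm]

variable (μ : CobwebVertex F → CobwebVertex F → ℤ) {zero : CobwebVertex F}

theorem mobius_eq_neg_sum_belowRank (hbot : IsBot zero)
    (hμ_sum : ∀ x y : CobwebVertex F, x < y → ∑ᶠ z ∈ Set.Icc x y, μ x z = 0)
    {x : CobwebVertex F} (hx : zero < x) :
    μ zero x = -∑ z ∈ belowRank F (rank x), μ zero z := by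
  have hsum := hμ_sum zero x hx
  rw [Icc_eq_insert_belowRank hbot, finsum_mem_insert _ (fun h => (mem_belowRank.1 h).false)
    (belowRank F _).finite_toSet, finsum_mem_coe_finset] at hsum
  omega

theorem sum_level_mobius (hbot : IsBot zero)
    (hμ_sum : ∀ x y : CobwebVertex F, x < y → ∑ᶠ z ∈ Set.Icc x y, μ x z = 0)
    {k : ℕ} (hk : rank zero < k) :
    ∑ x ∈ level F k, μ zero x = -(F k : ℤ) * ∑ s ∈ range k, ∑ x ∈ level F s, μ zero x := by
  calc ∑ x ∈ level F k, μ zero x = ∑ _x ∈ level F k, -∑ z ∈ belowRank F k, μ zero z :=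
        sum_congr rfl fun x hx => by
          rw [← mem_level.1 hx] at hk ⊢
          exact mobius_eq_neg_sum_belowRank μ hbot hμ_sum (lt_of_rank_lt hk)
    _ = _ := by rw [sum_const, card_level, sum_belowRank, nsmul_eq_mul]; ring

end CobwebVertex

open CobwebVertex in
theorem cobweb_whitney_first_kind (F : ℕ → ℕ) (hF0 : F 0 = 1)
    (μ : CobwebVertex F → CobwebVertex F → ℤ)
    (zero : CobwebVertex F) (hzero : zero.val = (1, 0))
    (hμ_refl : ∀ x : CobwebVertex F, μ x x = 1)
    (hμ_sum : ∀ x y : CobwebVertex F, x < y → ∑ᶠ z ∈ Set.Icc x y, μ x z = 0)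
    (k : ℕ) :
    (1 ≤ k → ∑ᶠ x ∈ {x : CobwebVertex F | rank x = k}, μ zero x =
      (F k : ℤ) * (-1 : ℤ) ^ k * ∏ i ∈ Finset.Icc 1 (k - 1), ((F i : ℤ) - 1)) ∧
    (∑ᶠ x ∈ {x : CobwebVertex F | rank x = 0}, μ zero x = 1) := by
  have hwhitney (s : ℕ) :
      ∑ᶠ x ∈ {x : CobwebVertex F | rank x = s}, μ zero x = ∑ x ∈ level F s, μ zero x := by
    rw [← coe_level, finsum_mem_coe_finset]
  have hw0 : ∑ x ∈ level F 0, μ zero x = 1 := by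
    rw [level_zero hF0 hzero, sum_singleton, hμ_refl]
  have hrank : rank zero = 0 := congrArg Prod.snd hzero
  have hrec (k : ℕ) (hk : 0 < k) : ∑ x ∈ level F k, μ zero x =
      -(F k : ℤ) * ∑ s ∈ range k, ∑ x ∈ level F s, μ zero x :=
    sum_level_mobius μ (isBot_of_val_eq hF0 hzero) hμ_sum (hrank ▸ hk)
  exact ⟨fun hk => (hwhitney k).trans (eq_prod_sub_one_of_recurrence hw0 hrec hk), (hwhitney 0).trans hw0⟩
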